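/- arXiv:2506.16182 — 6 statements merged into one kernel-verified Lean document; each statement's English description precedes it below -/
import Mathlib

section
/- Let n, m ≥ 1, let E, B ∈ ℝ^{n×n} be symmetric positive definite, A0 ∈ ℝ^{n×n} symmetric, a_1, …, a_m ∈ ℝ^n, and let A_m := [a_1, …, a_m] ∈ ℝ^{n×m}. Suppose (λ, v) ∈ ℝ × ℝ^n satisfies λ E v = (A0 + Σ_{i=1}^m (a_iᵀv)² a_i a_iᵀ) v and vᵀBv = 1, and suppose λE − A0 is invertible. Define G(λ) := A_mᵀ(λE−A0)⁻¹B(λE−A0)⁻¹A_m, H(λ) := A_mᵀ(λE−A0)⁻¹A_m, and μ ∈ ℝ^m by μ_i := a_iᵀv. Then (μ³)ᵀ G(λ) μ³ = 1 and H(λ) μ³ = μ, where μ³ denotes the entrywise cube of μ. -/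
/-!
Writing `M = λE - A₀`, the NEPv says exactly `M v = Aₘ μ³`, since the rank-one terms
contribute `Σᵢ (aᵢᵀv)² (aᵢᵀv) aᵢ`. Hence `v = M⁻¹ Aₘ μ³`, so `H(λ) μ³ = Aₘᵀ v = μ`, and by the
symmetry of `M` the quadratic form `(μ³)ᵀ G(λ) μ³` collapses to `vᵀ B v = 1`.
-/

open Matrix

namespace Matrix

variable {R : Type*} {ι m : Type*} [Fintype ι] [Fintype m]

theorem sum_smul_vecMulVec_self_mulVec [CommSemiring R] (c : m → R) (a : m → ι → R)
    (v : ι → R) :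
    (∑ i, c i • vecMulVec (a i) (a i)) *ᵥ v = (of fun r i => a i r) *ᵥ fun i => c i * (a i ⬝ᵥ v) := by
  ext r
  simp only [sum_mulVec, smul_mulVec, vecMulVec_mulVec, Finset.sum_apply, Pi.smul_apply,
    op_smul_eq_smul, smul_eq_mul]
  simp only [mulVec, dotProduct, of_apply]
  exact Finset.sum_congr rfl fun i _ => by ring

variable [Field R] [DecidableEq ι] {M B : Matrix ι ι R} {A : Matrix ι m R} {x : m → R} {v : ι → R}

theorem transpose_mul_nonsing_inv_mul_mulVec (hM : IsUnit M) (hx : A *ᵥ x = M *ᵥ v) :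
    (Aᵀ * M⁻¹ * A) *ᵥ x = Aᵀ *ᵥ v := by
  rw [← mulVec_mulVec, hx, ← mulVec_mulVec, mulVec_mulVec v M⁻¹,
    nonsing_inv_mul M ((isUnit_iff_isUnit_det M).mp hM), one_mulVec]

theorem dotProduct_transpose_mul_nonsing_inv_mul_mulVec (hM : IsUnit M) (hMs : M.IsSymm)
    (hx : A *ᵥ x = M *ᵥ v) :
    x ⬝ᵥ (Aᵀ * M⁻¹ * B * M⁻¹ * A) *ᵥ x = v ⬝ᵥ B *ᵥ v := by
  have hdet := (isUnit_iff_isUnit_det M).mp hM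
  calc x ⬝ᵥ (Aᵀ * M⁻¹ * B * M⁻¹ * A) *ᵥ x = (A *ᵥ x) ⬝ᵥ (M⁻¹ * B * M⁻¹) *ᵥ (A *ᵥ x) := by
        simp only [Matrix.mul_assoc, ← mulVec_mulVec, dotProduct_mulVec, vecMul_transpose]
    _ = v ⬝ᵥ (Mᵀ * M⁻¹ * B * (M⁻¹ * M)) *ᵥ v := by
        simp only [hx, Matrix.mul_assoc, ← mulVec_mulVec, dotProduct_mulVec, vecMul_transpose]
    _ = v ⬝ᵥ B *ᵥ v := by
        rw [hMs.eq, mul_nonsing_inv M hdet, nonsing_inv_mul M hdet, Matrix.one_mul, Matrix.mul_one]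

end Matrix

theorem stmt1_general (n m : ℕ)
    (E B A0 : Matrix (Fin n) (Fin n) ℝ)
    (hE : E.PosDef) (hA0 : A0.IsSymm)
    (a : Fin m → (Fin n → ℝ)) (lam : ℝ) (v : Fin n → ℝ)
    (heq : lam • E.mulVec v =
      (A0 + ∑ i, ((a i ⬝ᵥ v) ^ 2) • vecMulVec (a i) (a i)).mulVec v)
    (hnorm : v ⬝ᵥ B.mulVec v = 1)
    (hinv : IsUnit (lam • E - A0))
    (Am : Matrix (Fin n) (Fin m) ℝ) (hAm : Am = Matrix.of fun i j => a j i)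
    (G H : Matrix (Fin m) (Fin m) ℝ)
    (hG : G = Amᵀ * (lam • E - A0)⁻¹ * B * (lam • E - A0)⁻¹ * Am)
    (hH : H = Amᵀ * (lam • E - A0)⁻¹ * Am)
    (μ : Fin m → ℝ) (hμ : μ = fun i => a i ⬝ᵥ v) :
    (fun i => (μ i) ^ 3) ⬝ᵥ G.mulVec (fun i => (μ i) ^ 3) = 1 ∧
      H.mulVec (fun i => (μ i) ^ 3) = μ := by
  subst hG hH hμ
  have hsymm : (lam • E - A0).IsSymm :=
    ((isHermitian_iff_isSymm.mp hE.isHermitian).smul lam).sub hA0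
  have hres : Am *ᵥ (fun i => (a i ⬝ᵥ v) ^ 3) = (lam • E - A0) *ᵥ v := by
    rw [sub_mulVec, smul_mulVec, heq, add_mulVec, sum_smul_vecMulVec_self_mulVec, hAm]
    simp only [add_sub_cancel_left, ← pow_succ]
  exact ⟨(dotProduct_transpose_mul_nonsing_inv_mul_mulVec hinv hsymm hres).trans hnorm,
    (transpose_mul_nonsing_inv_mul_mulVec hinv hres).trans (by rw [hAm]; rfl)⟩

/-- a solution of the NEPv with normalization `vᵀBv = 1` yields a
solution `μ` (with `μᵢ = aᵢᵀv`) of the polynomial system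
`(μ³)ᵀ G(lam) μ³ = 1`, `H(lam) μ³ = μ`. -/
theorem stmt1 (n m : ℕ) (hn : 1 ≤ n) (hm : 1 ≤ m)
    (E B A0 : Matrix (Fin n) (Fin n) ℝ)
    (hE : E.PosDef) (hB : B.PosDef) (hA0 : A0.IsSymm)
    (a : Fin m → (Fin n → ℝ)) (lam : ℝ) (v : Fin n → ℝ)
    (heq : lam • E.mulVec v =
      (A0 + ∑ i, ((a i ⬝ᵥ v) ^ 2) • vecMulVec (a i) (a i)).mulVec v)
    (hnorm : v ⬝ᵥ B.mulVec v = 1)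
    (hinv : IsUnit (lam • E - A0))
    (Am : Matrix (Fin n) (Fin m) ℝ) (hAm : Am = Matrix.of fun i j => a j i)
    (G H : Matrix (Fin m) (Fin m) ℝ)
    (hG : G = Amᵀ * (lam • E - A0)⁻¹ * B * (lam • E - A0)⁻¹ * Am)
    (hH : H = Amᵀ * (lam • E - A0)⁻¹ * Am)
    (μ : Fin m → ℝ) (hμ : μ = fun i => a i ⬝ᵥ v) :
    (fun i => (μ i) ^ 3) ⬝ᵥ G.mulVec (fun i => (μ i) ^ 3) = 1 ∧
      H.mulVec (fun i => (μ i) ^ 3) = μ :=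
  stmt1_general n m E B A0 hE hA0 a lam v heq hnorm hinv Am hAm G H hG hH μ hμ
end

section
/- Let g11, g12, g22, h11, h12, μ1, μ2 be real numbers satisfying g11·μ1⁶ + 2·g12·μ1³·μ2³ + g22·μ2⁶ = 1 and μ1 − h11·μ1³ = h12·μ2³. Then γ := μ1² satisfies the cubic equation γ³·(h12²·g11 − 2·h12·h11·g12 + h11²·g22) + γ²·(2·h12·g12 − 2·h11·g22) + γ·g22 − h12² = 0. -/
/-- in the `m = 2` case of the reduced polynomial system,
`γ = μ1²` satisfies an explicit cubic equation. -/
theorem stmt5 (g11 g12 g22 h11 h12 μ1 μ2 : ℝ)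
    (h1 : g11 * μ1 ^ 6 + 2 * g12 * μ1 ^ 3 * μ2 ^ 3 + g22 * μ2 ^ 6 = 1)
    (h2 : μ1 - h11 * μ1 ^ 3 = h12 * μ2 ^ 3) :
    (μ1 ^ 2) ^ 3 * (h12 ^ 2 * g11 - 2 * h12 * h11 * g12 + h11 ^ 2 * g22) +
      (μ1 ^ 2) ^ 2 * (2 * h12 * g12 - 2 * h11 * g22) +
      (μ1 ^ 2) * g22 - h12 ^ 2 = 0 := by
  -- Eliminate μ2: multiply the first equation by h12² and substitute h12·μ2³ from the second.
  have hμ2 : h12 * μ2 ^ 3 = μ1 * (1 - h11 * μ1 ^ 2) := by rw [← h2]; ring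
  calc _ = h12 ^ 2 * g11 * μ1 ^ 6 + 2 * g12 * μ1 ^ 3 * h12 * (μ1 * (1 - h11 * μ1 ^ 2))
          + g22 * (μ1 * (1 - h11 * μ1 ^ 2)) ^ 2 - h12 ^ 2 := by ring
    _ = h12 ^ 2 * (g11 * μ1 ^ 6 + 2 * g12 * μ1 ^ 3 * μ2 ^ 3 + g22 * μ2 ^ 6) - h12 ^ 2 := by
          rw [← hμ2]; ring
    _ = 0 := by rw [h1]; ring
end

section
/- Let U ⊆ ℂ be open and connected, λ* ∈ U, and let h11, h12, g11, g12, g22 : U → ℂ be analytic with h11(λ*) a strictly positive real number. Let μ1, μ2 : U \ {λ*} → ℂ be analytic and satisfy, for all λ ∈ U \ {λ*}, μ1(λ) = h11(λ)·μ1(λ)³ + h12(λ)·μ2(λ)³ and g11(λ)·μ1(λ)⁶ + 2·g12(λ)·μ1(λ)³·μ2(λ)³ + g22(λ)·μ2(λ)⁶ = 1, and suppose μ2(λ) → 0 as λ → λ*. Then there exists L ∈ ℂ with L² = 1/h11(λ*) such that μ1(λ) → L as λ → λ*, and the function equal to μ1 on U \ {λ*} and to L at λ* is analytic at λ*. -/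
/-!
Near `λ*` the cubic `μ1 = h11 μ1³ + h12 μ2³` with `h11 → h11(λ*) ≠ 0` and `h12 μ2³ → 0` keeps
`μ1` bounded, so Riemann's removable singularity theorem gives a limit `L` and an analytic
extension. Passing to the limit in the two equations gives `L = h11(λ*) L³` and
`g11(λ*) L⁶ = 1`; the latter rules out `L = 0`, whence `L² = 1 / h11(λ*)`.
-/

open Filter Function Topology

/-- Write the equation as `b = -x (a x² - 1)`: once `c ‖x‖² > 2` and `‖x‖ > 1`, the right-hand
side has norm `> 1`. -/
theorem norm_le_of_eq_mul_pow_three_add {𝕜 : Type*} [NormedField 𝕜] {x a b : 𝕜} {c : ℝ}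
    (hc : 0 < c) (ha : c ≤ ‖a‖) (hb : ‖b‖ ≤ 1) (h : x = a * x ^ 3 + b) :
    ‖x‖ ≤ max 1 (2 / c) := by
  by_contra! hx
  have hx1 : 1 < ‖x‖ := (le_max_left _ _).trans_lt hx
  have hxc : 2 < c * ‖x‖ := by
    have := (le_max_right _ _).trans_lt hx
    rwa [div_lt_iff₀' hc] at this
  have hb_eq : ‖b‖ = ‖x‖ * ‖a * x ^ 2 - 1‖ := by
    rw [show b = -(x * (a * x ^ 2 - 1)) by linear_combination -h, norm_neg, norm_mul]
  have hax : c * ‖x‖ ^ 2 - 1 ≤ ‖a * x ^ 2 - 1‖ := by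
    calc c * ‖x‖ ^ 2 - 1 ≤ ‖a * x ^ 2‖ - ‖(1 : 𝕜)‖ := by
          rw [norm_mul, norm_pow, norm_one]
          gcongr
      _ ≤ ‖a * x ^ 2 - 1‖ := norm_sub_norm_le _ _
  nlinarith

theorem isBoundedUnder_norm_of_eq_mul_pow_three_add {𝕜 α : Type*} [NormedField 𝕜]
    {l : Filter α} {x a b : α → 𝕜} {a₀ : 𝕜} (ha₀ : a₀ ≠ 0) (ha : Tendsto a l (𝓝 a₀))
    (hb : Tendsto b l (𝓝 0)) (h : ∀ᶠ t in l, x t = a t * x t ^ 3 + b t) :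
    IsBoundedUnder (· ≤ ·) l (‖x ·‖) := by
  have hc : 0 < ‖a₀‖ / 2 := by positivity
  have ha_large : ∀ᶠ t in l, ‖a₀‖ / 2 ≤ ‖a t‖ :=
    ha.norm.eventually (eventually_ge_nhds (by linarith))
  have hb_small : ∀ᶠ t in l, ‖b t‖ ≤ 1 :=
    (norm_zero (E := 𝕜) ▸ hb.norm).eventually (eventually_le_nhds one_pos)
  refine ⟨max 1 (2 / (‖a₀‖ / 2)), eventually_map.2 ?_⟩
  filter_upwards [ha_large, hb_small, h] with t hat hbt ht
  exact norm_le_of_eq_mul_pow_three_add hc hat hbt ht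

namespace Complex

variable {E : Type*} [NormedAddCommGroup E] [NormedSpace ℂ E] [CompleteSpace E]
  {f : ℂ → E} {c : ℂ}

theorem exists_tendsto_of_differentiable_on_punctured_nhds_of_bounded_under
    (hd : ∀ᶠ z in 𝓝[≠] c, DifferentiableAt ℂ f z)
    (hb : IsBoundedUnder (· ≤ ·) (𝓝[≠] c) (‖f ·‖)) :
    ∃ L, Tendsto f (𝓝[≠] c) (𝓝 L) := by
  obtain ⟨C, hC⟩ := hb
  refine ⟨_, tendsto_limUnder_of_differentiable_on_punctured_nhds_of_bounded_under hd
    ⟨C + ‖f c‖, eventually_map.2 ?_⟩⟩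
  filter_upwards [eventually_map.1 hC] with z hz
  exact norm_sub_le_of_le hz le_rfl

theorem analyticAt_update_of_tendsto {L : E} (hd : ∀ᶠ z in 𝓝[≠] c, DifferentiableAt ℂ f z)
    (hL : Tendsto f (𝓝[≠] c) (𝓝 L)) : AnalyticAt ℂ (update f c L) c := by
  refine analyticAt_of_differentiable_on_punctured_nhds_of_continuousAt ?_
    (continuousAt_update_same.2 hL)
  filter_upwards [hd, self_mem_nhdsWithin] with z hz hzc
  refine hz.congr_of_eventuallyEq ?_
  filter_upwards [isOpen_ne.mem_nhds hzc] with w hw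
  exact update_of_ne hw _ _

end Complex

theorem sq_eq_one_div_of_eq_mul_pow_three {K : Type*} [Field K] {L a g : K}
    (h₁ : L = a * L ^ 3) (h₂ : g * L ^ 6 = 1) : L ^ 2 = 1 / a := by
  have hL : L ≠ 0 := by
    rintro rfl
    simp at h₂
  have haL : a * L ^ 2 = 1 := by
    apply mul_left_cancel₀ hL
    linear_combination -h₁
  exact eq_one_div_of_mul_eq_one_right haL

theorem stmt6_general (U : Set ℂ) (hUopen : IsOpen U)
    (lams : ℂ) (hlams : lams ∈ U)
    (h11 h12 g11 g12 g22 : ℂ → ℂ)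
    (hh11 : AnalyticOnNhd ℂ h11 U) (hh12 : AnalyticOnNhd ℂ h12 U)
    (hg11 : AnalyticOnNhd ℂ g11 U) (hg12 : AnalyticOnNhd ℂ g12 U)
    (hg22 : AnalyticOnNhd ℂ g22 U)
    (hpos : ∃ r : ℝ, 0 < r ∧ h11 lams = (r : ℂ))
    (μ1 μ2 : ℂ → ℂ)
    (hμ1 : AnalyticOnNhd ℂ μ1 (U \ {lams}))
    (heq1 : ∀ lam ∈ U \ {lams},
      μ1 lam = h11 lam * (μ1 lam) ^ 3 + h12 lam * (μ2 lam) ^ 3)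
    (heq2 : ∀ lam ∈ U \ {lams},
      g11 lam * (μ1 lam) ^ 6 + 2 * g12 lam * (μ1 lam) ^ 3 * (μ2 lam) ^ 3 +
        g22 lam * (μ2 lam) ^ 6 = 1)
    (hlim : Tendsto μ2 (nhdsWithin lams {lams}ᶜ) (nhds 0)) :
    ∃ L : ℂ, L ^ 2 = 1 / h11 lams ∧
      Tendsto μ1 (nhdsWithin lams {lams}ᶜ) (nhds L) ∧
      AnalyticAt ℂ (Function.update μ1 lams L) lams := by
  obtain ⟨r, hr, hval⟩ := hpos
  have h11_ne : h11 lams ≠ 0 := by rw [hval]; exact_mod_cast hr.ne'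
  have hmem : ∀ᶠ lam in 𝓝[≠] lams, lam ∈ U \ {lams} :=
    sdiff_mem_nhdsWithin_compl (hUopen.mem_nhds hlams) _
  have hcont : ∀ f : ℂ → ℂ, AnalyticOnNhd ℂ f U → Tendsto f (𝓝[≠] lams) (𝓝 (f lams)) :=
    fun f hf => (hf lams hlams).continuousAt.tendsto.mono_left nhdsWithin_le_nhds
  have hd : ∀ᶠ z in 𝓝[≠] lams, DifferentiableAt ℂ μ1 z :=
    hmem.mono fun z hz => (hμ1 z hz).differentiableAt
  obtain ⟨L, hL⟩ :=
    Complex.exists_tendsto_of_differentiable_on_punctured_nhds_of_bounded_under hd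
      (isBoundedUnder_norm_of_eq_mul_pow_three_add h11_ne (hcont h11 hh11)
        (by simpa using (hcont h12 hh12).mul (hlim.pow 3)) (hmem.mono heq1))
  have hL₁ : L = h11 lams * L ^ 3 := by
    refine tendsto_nhds_unique hL (Tendsto.congr' (hmem.mono fun z hz => (heq1 z hz).symm) ?_)
    simpa using ((hcont h11 hh11).mul (hL.pow 3)).add ((hcont h12 hh12).mul (hlim.pow 3))
  have hL₂ : g11 lams * L ^ 6 = 1 := by
    refine tendsto_nhds_unique (Tendsto.congr' (hmem.mono heq2) ?_) tendsto_const_nhds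
    simpa using (((hcont g11 hg11).mul (hL.pow 6)).add
      (((tendsto_const_nhds.mul (hcont g12 hg12)).mul (hL.pow 3)).mul (hlim.pow 3))).add
      ((hcont g22 hg22).mul (hlim.pow 6))
  exact ⟨L, sq_eq_one_div_of_eq_mul_pow_three hL₁ hL₂, hL,
    Complex.analyticAt_update_of_tendsto hd hL⟩

/-- removable singularity of `μ1` at `lams`: if `μ2 → 0` as
`lam → lams`, then `μ1` tends to a limit `L` with `L² = 1/h11(lams)`, and extending
`μ1` by `L` at `lams` gives a function analytic at `lams`. -/
theorem stmt6 (U : Set ℂ) (hUopen : IsOpen U) (hUconn : IsConnected U)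
    (lams : ℂ) (hlams : lams ∈ U)
    (h11 h12 g11 g12 g22 : ℂ → ℂ)
    (hh11 : AnalyticOnNhd ℂ h11 U) (hh12 : AnalyticOnNhd ℂ h12 U)
    (hg11 : AnalyticOnNhd ℂ g11 U) (hg12 : AnalyticOnNhd ℂ g12 U)
    (hg22 : AnalyticOnNhd ℂ g22 U)
    (hpos : ∃ r : ℝ, 0 < r ∧ h11 lams = (r : ℂ))
    (μ1 μ2 : ℂ → ℂ)
    (hμ1 : AnalyticOnNhd ℂ μ1 (U \ {lams}))
    (hμ2 : AnalyticOnNhd ℂ μ2 (U \ {lams}))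
    (heq1 : ∀ lam ∈ U \ {lams},
      μ1 lam = h11 lam * (μ1 lam) ^ 3 + h12 lam * (μ2 lam) ^ 3)
    (heq2 : ∀ lam ∈ U \ {lams},
      g11 lam * (μ1 lam) ^ 6 + 2 * g12 lam * (μ1 lam) ^ 3 * (μ2 lam) ^ 3 +
        g22 lam * (μ2 lam) ^ 6 = 1)
    (hlim : Tendsto μ2 (nhdsWithin lams {lams}ᶜ) (nhds 0)) :
    ∃ L : ℂ, L ^ 2 = 1 / h11 lams ∧
      Tendsto μ1 (nhdsWithin lams {lams}ᶜ) (nhds L) ∧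
      AnalyticAt ℂ (Function.update μ1 lams L) lams :=
  stmt6_general U hUopen lams hlams h11 h12 g11 g12 g22 hh11 hh12 hg11 hg12 hg22 hpos μ1 μ2 hμ1 heq1
    heq2 hlim
end

section
/- Let λ* ∈ ℝ, and let h11, h12, μ1 : ℝ → ℝ be real-analytic in a neighborhood of λ* with h11(λ*) > 0, μ1(λ*)² = 1/h11(λ*), and h12(λ*) ≠ 0. Let μ2 : ℝ → ℝ be a function satisfying h12(λ)·μ2(λ)³ = μ1(λ) − h11(λ)·μ1(λ)³ for all λ in a neighborhood of λ*. Then μ2(λ)² = O(|λ − λ*|^{2/3}) as λ → λ*, i.e. the function λ ↦ μ2(λ)² is big-O of λ ↦ |λ − λ*|^{2/3} with respect to the filter of neighborhoods of λ*. -/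
/-!
The right-hand side `f := μ1 - h11 μ1³` is differentiable and vanishes at `λ*`
(as `μ1² = 1 / h11` there), so `f(λ) = O(λ - λ*)`.
Dividing by `h12`, which stays away from `0` near `λ*`, gives `μ2³ = O(λ - λ*)`,
and raising to the power `2/3` gives the claim.
-/

open Filter Asymptotics Topology

theorem sub_mul_pow_three_eq_zero_of_sq_eq_one_div {a b : ℝ} (h : a ^ 2 = 1 / b) :
    a - b * a ^ 3 = 0 := by
  rcases eq_or_ne b 0 with rfl | hb
  · simpa using h
  · have hab : b * a ^ 2 = 1 := by rw [h]; field_simp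
    linear_combination (-a) * hab

theorem Asymptotics.isBigO_of_mul_eventuallyEq {α 𝕜 : Type*} [NormedDivisionRing 𝕜]
    {l : Filter α} {c g f : α → 𝕜} {c₀ : 𝕜} (hc : Tendsto c l (𝓝 c₀)) (hc₀ : c₀ ≠ 0)
    (h : ∀ᶠ x in l, c x * g x = f x) : g =O[l] f := by
  have hg : g =ᶠ[l] fun x => (c x)⁻¹ * f x := by
    filter_upwards [h, hc.eventually_ne hc₀] with x hx hcx
    rw [← hx, inv_mul_cancel_left₀ hcx]
  have hinv : (fun x => (c x)⁻¹) =O[l] fun _ => (1 : 𝕜) := (hc.inv₀ hc₀).isBigO_one 𝕜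
  exact hg.trans_isBigO (by simpa using hinv.mul (isBigO_refl f l))

theorem Asymptotics.IsBigO.pow_rpow_div {α : Type*} {l : Filter α} {g u : α → ℝ} {n : ℕ}
    (hn : n ≠ 0) (h : (fun x => g x ^ n) =O[l] u) (m : ℕ) :
    (fun x => g x ^ m) =O[l] fun x => |u x| ^ ((m : ℝ) / n) := by
  have habs : (fun x => |g x| ^ n) =O[l] fun x => |u x| := by
    simpa only [Real.norm_eq_abs, abs_pow] using h.norm_left.norm_right
  rw [← isBigO_abs_left]
  refine (habs.rpow (by positivity) (.of_forall fun x => abs_nonneg _)).congr' ?_ .rfl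
  filter_upwards with x
  rw [← Real.rpow_natCast, ← Real.rpow_mul (abs_nonneg _), mul_div_cancel₀ _ (by exact_mod_cast hn),
    Real.rpow_natCast, abs_pow]

theorem stmt7_general (lams : ℝ) (h11 h12 μ1 : ℝ → ℝ)
    (hh11 : AnalyticAt ℝ h11 lams) (hh12 : AnalyticAt ℝ h12 lams)
    (hμ1 : AnalyticAt ℝ μ1 lams)
    (hμ1sq : (μ1 lams) ^ 2 = 1 / h11 lams)
    (hne : h12 lams ≠ 0)
    (μ2 : ℝ → ℝ)
    (heq : ∀ᶠ lam in nhds lams,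
      h12 lam * (μ2 lam) ^ 3 = μ1 lam - h11 lam * (μ1 lam) ^ 3) :
    (fun lam => (μ2 lam) ^ 2) =O[nhds lams]
      (fun lam => |lam - lams| ^ ((2 : ℝ) / 3)) := by
  have hf : DifferentiableAt ℝ (fun lam => μ1 lam - h11 lam * μ1 lam ^ 3) lams :=
    (hμ1.sub (hh11.mul (hμ1.pow 3))).differentiableAt
  have hf_sub := hf.isBigO_sub
  simp only [sub_mul_pow_three_eq_zero_of_sq_eq_one_div hμ1sq, sub_zero] at hf_sub
  have hμ2 : (fun lam => μ2 lam ^ 3) =O[𝓝 lams] fun lam => lam - lams :=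
    (isBigO_of_mul_eventuallyEq hh12.continuousAt.tendsto hne heq).trans hf_sub
  simpa using hμ2.pow_rpow_div three_ne_zero 2

/-- near a branch point `lams` with `μ1(lams)² = 1/h11(lams)` and
`h12(lams) ≠ 0`, one has `μ2(λ)² = O(|λ - lams|^(2/3))` as `λ → lams`. -/
theorem stmt7 (lams : ℝ) (h11 h12 μ1 : ℝ → ℝ)
    (hh11 : AnalyticAt ℝ h11 lams) (hh12 : AnalyticAt ℝ h12 lams)
    (hμ1 : AnalyticAt ℝ μ1 lams)
    (hpos : 0 < h11 lams) (hμ1sq : (μ1 lams) ^ 2 = 1 / h11 lams)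
    (hne : h12 lams ≠ 0)
    (μ2 : ℝ → ℝ)
    (heq : ∀ᶠ lam in nhds lams,
      h12 lam * (μ2 lam) ^ 3 = μ1 lam - h11 lam * (μ1 lam) ^ 3) :
    (fun lam => (μ2 lam) ^ 2) =O[nhds lams]
      (fun lam => |lam - lams| ^ ((2 : ℝ) / 3)) :=
  stmt7_general lams h11 h12 μ1 hh11 hh12 hμ1 hμ1sq hne μ2 heq
end

section
/- Let n ≥ 1, A0 ∈ ℝ^{n×n} symmetric, a ∈ ℝ^n, and λ ∈ ℝ such that λI − A0 is invertible. Suppose v ∈ ℝ^n satisfies λ v = (A0 + (aᵀv)²·a·aᵀ)·v and ‖v‖ = 1 (Euclidean norm). Then (aᵀv)⁶ · aᵀ(λI − A0)⁻²a = 1, where (λI − A0)⁻² := ((λI − A0)⁻¹)². -/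
/-! Writing `μ = aᵀv`, the equation says `(λI - A0) v = μ³ a`, so `v = μ³ (λI - A0)⁻¹ a`.
Since `(λI - A0)⁻¹` is symmetric, `aᵀ(λI - A0)⁻² a = ‖(λI - A0)⁻¹ a‖²`, hence
`μ⁶ · aᵀ(λI - A0)⁻² a = ‖v‖² = 1`. -/

open Matrix

section

variable {ι R : Type*} [Fintype ι] [DecidableEq ι] [CommRing R]

lemma smul_one_sub_mulVec_eq_of_nepv {A : Matrix ι ι R} {a v : ι → R} {lam : R}
    (h : lam • v = (A + (a ⬝ᵥ v) ^ 2 • vecMulVec a a) *ᵥ v) :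
    (lam • 1 - A) *ᵥ v = (a ⬝ᵥ v) ^ 3 • a := by
  rw [add_mulVec, smul_mulVec, vecMulVec_mulVec] at h
  rw [sub_mulVec, smul_mulVec, one_mulVec, h, add_sub_cancel_left, op_smul_eq_smul, smul_smul,
    ← pow_succ]

lemma dotProduct_sq_mulVec_of_isSymm {M : Matrix ι ι R} (hM : M.IsSymm) (a : ι → R) :
    a ⬝ᵥ (M ^ 2 *ᵥ a) = (M *ᵥ a) ⬝ᵥ (M *ᵥ a) := by
  rw [sq, ← mulVec_mulVec, dotProduct_mulVec, ← mulVec_transpose, hM.eq]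

lemma pow_six_mul_dotProduct_inv_sq_mulVec_of_nepv {A : Matrix ι ι R} (hA : A.IsSymm)
    {a v : ι → R} {lam : R} (hB : IsUnit (lam • 1 - A))
    (h : lam • v = (A + (a ⬝ᵥ v) ^ 2 • vecMulVec a a) *ᵥ v) :
    (a ⬝ᵥ v) ^ 6 * (a ⬝ᵥ ((lam • 1 - A)⁻¹ ^ 2 *ᵥ a)) = v ⬝ᵥ v := by
  have := hB.invertible
  have hv : v = (a ⬝ᵥ v) ^ 3 • ((lam • 1 - A)⁻¹ *ᵥ a) := by
    rw [← mulVec_smul, inv_mulVec_eq_vec (smul_one_sub_mulVec_eq_of_nepv h).symm]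
  have hsymm : (lam • 1 - A)⁻¹.IsSymm := ((isSymm_one.smul lam).sub hA).inv
  conv_rhs => rw [hv]
  rw [dotProduct_sq_mulVec_of_isSymm hsymm, smul_dotProduct, dotProduct_smul,
    smul_smul, smul_eq_mul, ← pow_add]

end

theorem stmt13_general (n : ℕ)
    (A0 : Matrix (Fin n) (Fin n) ℝ) (hA0 : A0.IsSymm)
    (a : Fin n → ℝ) (lam : ℝ)
    (hinv : IsUnit (lam • (1 : Matrix (Fin n) (Fin n) ℝ) - A0))
    (v : Fin n → ℝ)
    (heq : lam • v = (A0 + ((a ⬝ᵥ v) ^ 2) • vecMulVec a a).mulVec v)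
    (hnorm : v ⬝ᵥ v = 1) :
    (a ⬝ᵥ v) ^ 6 *
      (a ⬝ᵥ (((lam • (1 : Matrix (Fin n) (Fin n) ℝ) - A0)⁻¹) ^ 2).mulVec a) = 1 := by
  rw [pow_six_mul_dotProduct_inv_sq_mulVec_of_nepv hA0 hinv heq, hnorm]

/-- for the single-term NEPv `λv = (A0 + (aᵀv)² a aᵀ)v` with
`‖v‖ = 1` (i.e. `vᵀv = 1`), the scalar `μ = aᵀv` satisfies
`μ⁶ · aᵀ(λI - A0)⁻² a = 1`. -/
theorem stmt13 (n : ℕ) (hn : 1 ≤ n)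
    (A0 : Matrix (Fin n) (Fin n) ℝ) (hA0 : A0.IsSymm)
    (a : Fin n → ℝ) (lam : ℝ)
    (hinv : IsUnit (lam • (1 : Matrix (Fin n) (Fin n) ℝ) - A0))
    (v : Fin n → ℝ)
    (heq : lam • v = (A0 + ((a ⬝ᵥ v) ^ 2) • vecMulVec a a).mulVec v)
    (hnorm : v ⬝ᵥ v = 1) :
    (a ⬝ᵥ v) ^ 6 *
      (a ⬝ᵥ (((lam • (1 : Matrix (Fin n) (Fin n) ℝ) - A0)⁻¹) ^ 2).mulVec a) = 1 :=
  stmt13_general n A0 hA0 a lam hinv v heq hnorm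
end

section
/- Let n ≥ 1, A0 ∈ ℝ^{n×n} symmetric, a ∈ ℝ^n with a ≠ 0, and λ ∈ ℝ such that λI − A0 is invertible. Define f(λ) := (aᵀ(λI − A0)⁻²a)^{−1/3}, where (λI − A0)⁻² := ((λI − A0)⁻¹)² (note aᵀ(λI − A0)⁻²a = ‖(λI − A0)⁻¹a‖² > 0). Suppose v ∈ ℝ^n satisfies (A0 − λI + f(λ)·a·aᵀ)·v = 0 and ‖v‖ = 1 (Euclidean norm). Then (aᵀv)² = f(λ) and consequently λ v = (A0 + (aᵀv)²·a·aᵀ)·v. -/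
open Matrix

/-!
Write `M = λI - A0`. The equation says `M v = f (aᵀv) a`, so `v = f (aᵀv) u` with `u = M⁻¹ a`,
and by symmetry of `M` the quantity `s = aᵀM⁻²a` is `‖u‖²`. Normalizing `v` gives
`f² (aᵀv)² s = 1`, so `s > 0`; since `f = s^(-1/3)`, i.e. `s = f⁻³`, this is `(aᵀv)² = f`. Substituting
`(aᵀv)² = f` back turns the equation into the NEPv.
-/

section

variable {ι R : Type*} [Fintype ι] [DecidableEq ι] [CommRing R]

lemma Matrix.dotProduct_inv_sq_mulVec_of_transpose_eq {M : Matrix ι ι R} (hM : Mᵀ = M)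
    (a : ι → R) : a ⬝ᵥ (M⁻¹ ^ 2) *ᵥ a = (M⁻¹ *ᵥ a) ⬝ᵥ (M⁻¹ *ᵥ a) := by
  have hMinv : M⁻¹ᵀ = M⁻¹ := by rw [transpose_nonsing_inv, hM]
  rw [sq, ← mulVec_mulVec, dotProduct_mulVec, ← hMinv, vecMul_transpose, hMinv]

lemma Matrix.sub_smul_one_add_smul_vecMulVec_mulVec_eq_zero_iff {A : Matrix ι ι R}
    {lam f : R} {a v : ι → R} :
    (A - lam • 1 + f • vecMulVec a a) *ᵥ v = 0 ↔ (A + f • vecMulVec a a) *ᵥ v = lam • v := by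
  rw [sub_add_eq_add_sub, sub_mulVec, smul_mulVec, one_mulVec, sub_eq_zero]

lemma Matrix.eq_smul_inv_mulVec_of_add_smul_vecMulVec_mulVec_eq {A : Matrix ι ι R}
    {lam f : R} {a v : ι → R} (hM : IsUnit (lam • 1 - A))
    (h : (A + f • vecMulVec a a) *ᵥ v = lam • v) :
    v = (f * (a ⬝ᵥ v)) • (lam • 1 - A)⁻¹ *ᵥ a := by
  have hMv : (lam • 1 - A) *ᵥ v = (f * (a ⬝ᵥ v)) • a := by
    rw [sub_mulVec, smul_mulVec, one_mulVec, ← h, add_mulVec, smul_mulVec, vecMulVec_mulVec]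
    ext i
    simp [mul_assoc]
  calc v = ((lam • 1 - A)⁻¹ * (lam • 1 - A)) *ᵥ v := by
        rw [nonsing_inv_mul _ ((isUnit_iff_isUnit_det _).mp hM), one_mulVec]
    _ = (f * (a ⬝ᵥ v)) • (lam • 1 - A)⁻¹ *ᵥ a := by
        rw [← mulVec_mulVec, hMv, mulVec_smul]

end

lemma sq_eq_rpow_neg_one_third_of_mul_sq_mul_eq_one {s t : ℝ} (hs : 0 < s)
    (h : (s ^ (-(1 / 3) : ℝ) * t) ^ 2 * s = 1) : t ^ 2 = s ^ (-(1 / 3) : ℝ) := by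
  have hcube : (s ^ (1 / 3 : ℝ)) ^ 3 = s := by
    rw [← Real.rpow_natCast, ← Real.rpow_mul hs.le]
    norm_num
  have hpos : 0 < s ^ (1 / 3 : ℝ) := Real.rpow_pos_of_pos hs _
  rw [Real.rpow_neg hs.le] at h ⊢
  set g := s ^ (1 / 3 : ℝ)
  rw [← hcube] at h
  field_simp at h ⊢
  linear_combination h

theorem stmt14_general (n : ℕ)
    (A0 : Matrix (Fin n) (Fin n) ℝ) (hA0 : A0.IsSymm)
    (a : Fin n → ℝ) (lam : ℝ)
    (hinv : IsUnit (lam • (1 : Matrix (Fin n) (Fin n) ℝ) - A0))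
    (f : ℝ)
    (hf : f = (a ⬝ᵥ (((lam • (1 : Matrix (Fin n) (Fin n) ℝ) - A0)⁻¹) ^ 2).mulVec a)
      ^ (-(1 / 3) : ℝ))
    (v : Fin n → ℝ)
    (heq : (A0 - lam • (1 : Matrix (Fin n) (Fin n) ℝ) + f • vecMulVec a a).mulVec v = 0)
    (hnorm : v ⬝ᵥ v = 1) :
    (a ⬝ᵥ v) ^ 2 = f ∧
      lam • v = (A0 + ((a ⬝ᵥ v) ^ 2) • vecMulVec a a).mulVec v := by
  rw [sub_smul_one_add_smul_vecMulVec_mulVec_eq_zero_iff] at heq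
  have hv := eq_smul_inv_mulVec_of_add_smul_vecMulVec_mulVec_eq hinv heq
  set u := (lam • (1 : Matrix (Fin n) (Fin n) ℝ) - A0)⁻¹ *ᵥ a
  have hsymm : (lam • (1 : Matrix (Fin n) (Fin n) ℝ) - A0)ᵀ = lam • 1 - A0 := by
    simp [hA0.eq]
  rw [dotProduct_inv_sq_mulVec_of_transpose_eq hsymm] at hf
  set c := f * (a ⬝ᵥ v)
  have hunit : c ^ 2 * (u ⬝ᵥ u) = 1 := by
    rw [hv, smul_dotProduct, dotProduct_smul, smul_eq_mul, smul_eq_mul] at hnorm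
    linear_combination hnorm
  have hu : 0 < u ⬝ᵥ u :=
    lt_of_le_of_ne (Finset.sum_nonneg fun i _ => mul_self_nonneg (u i))
      fun h => by simp [← h] at hunit
  have hsq : (a ⬝ᵥ v) ^ 2 = f := by
    subst hf
    exact sq_eq_rpow_neg_one_third_of_mul_sq_mul_eq_one hu hunit
  exact ⟨hsq, by rw [hsq, heq]⟩

/-- converse direction for one nonlinear term: a normalized solution
of the NEP `(A0 - λI + f(λ) a aᵀ)v = 0`, where `f(λ) = (aᵀ(λI - A0)⁻² a)^(-1/3)`,
satisfies `(aᵀv)² = f(λ)` and hence solves the NEPv `λv = (A0 + (aᵀv)² a aᵀ)v`. -/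
theorem stmt14 (n : ℕ) (hn : 1 ≤ n)
    (A0 : Matrix (Fin n) (Fin n) ℝ) (hA0 : A0.IsSymm)
    (a : Fin n → ℝ) (ha : a ≠ 0) (lam : ℝ)
    (hinv : IsUnit (lam • (1 : Matrix (Fin n) (Fin n) ℝ) - A0))
    (f : ℝ)
    (hf : f = (a ⬝ᵥ (((lam • (1 : Matrix (Fin n) (Fin n) ℝ) - A0)⁻¹) ^ 2).mulVec a)
      ^ (-(1 / 3) : ℝ))
    (v : Fin n → ℝ)
    (heq : (A0 - lam • (1 : Matrix (Fin n) (Fin n) ℝ) + f • vecMulVec a a).mulVec v = 0)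
    (hnorm : v ⬝ᵥ v = 1) :
    (a ⬝ᵥ v) ^ 2 = f ∧
      lam • v = (A0 + ((a ⬝ᵥ v) ^ 2) • vecMulVec a a).mulVec v :=
  stmt14_general n A0 hA0 a lam hinv f hf v heq hnorm
end
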